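/- arXiv:2602.05964 — 2 statements merged into one kernel-verified Lean document; each statement's English description precedes it below -/
import Mathlib

section
/- For all real numbers $\xi\ge e$ and $\eta\ge e^2$, one has $\xi\ln\xi \le \frac{\xi^2\ln^2\eta}{\eta}+\eta$. -/
open Real

theorem stmt_1 (ξ η : ℝ) (hξ : Real.exp 1 ≤ ξ) (hη : Real.exp 1 ^ 2 ≤ η) :
    ξ * Real.log ξ ≤ ξ ^ 2 * (Real.log η) ^ 2 / η + η := by
  have he : (0:ℝ) < Real.exp 1 := Real.exp_pos 1
  have hξ0 : 0 < ξ := lt_of_lt_of_le he hξ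
  have hη0 : 0 < η := lt_of_lt_of_le (by positivity) hη
  have hLη : 2 ≤ Real.log η := by
    have h := Real.log_le_log (by positivity) hη
    simpa [Real.log_pow, Real.log_exp] using h
  have hlogξ0 : (1:ℝ) ≤ Real.log ξ := by
    have h := Real.log_le_log he hξ
    simpa [Real.log_exp] using h
  by_cases hc : ξ ≤ η ^ 2
  · have h1 : Real.log ξ ≤ 2 * Real.log η := by
      have h := Real.log_le_log hξ0 hc
      simpa [Real.log_pow] using h
    rw [div_add' _ _ _ hη0.ne', le_div_iff₀ hη0]
    nlinarith [sq_nonneg (ξ * Real.log η - η),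
      mul_le_mul_of_nonneg_left h1 (by positivity : (0:ℝ) ≤ ξ * η)]
  · push_neg at hc
    have hs : 0 < Real.sqrt ξ := Real.sqrt_pos.2 hξ0
    have hηs : η ≤ Real.sqrt ξ := by
      have := Real.le_sqrt hη0.le hξ0.le
      exact this.2 hc.le
    have hsq : Real.sqrt ξ ^ 2 = ξ := Real.sq_sqrt hξ0.le
    have hlog : Real.log ξ ≤ 4 * Real.sqrt ξ := by
      have h2 : Real.log (Real.sqrt ξ) = Real.log ξ / 2 := Real.log_sqrt hξ0.le
      have h3 : Real.log (Real.sqrt ξ) ≤ Real.sqrt ξ - 1 := Real.log_le_sub_one_of_pos hs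
      nlinarith
    have key : ξ * Real.log ξ ≤ ξ ^ 2 * (Real.log η) ^ 2 / η := by
      rw [le_div_iff₀ hη0]
      have s1 : ξ * Real.log ξ * η ≤ ξ * (4 * Real.sqrt ξ) * η := by
        have := mul_le_mul_of_nonneg_right (mul_le_mul_of_nonneg_left hlog hξ0.le) hη0.le
        linarith
      have s2 : ξ * (4 * Real.sqrt ξ) * η ≤ ξ * (4 * Real.sqrt ξ) * Real.sqrt ξ := by
        have : (0:ℝ) ≤ ξ * (4 * Real.sqrt ξ) := by positivity
        exact mul_le_mul_of_nonneg_left hηs this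
      have s3 : ξ * (4 * Real.sqrt ξ) * Real.sqrt ξ = 4 * ξ ^ 2 := by
        nlinarith [hsq]
      have h4 : (4:ℝ) ≤ (Real.log η) ^ 2 := by nlinarith
      have s4 : 4 * ξ ^ 2 ≤ ξ ^ 2 * (Real.log η) ^ 2 := by
        nlinarith [mul_le_mul_of_nonneg_left h4 (sq_nonneg ξ)]
      linarith
    linarith
end

section
/- Let $\rho_0:[0,\infty)\to(0,\infty)$ be nondecreasing with $\rho_0(\xi)\to+\infty$ as $\xi\to\infty$. Then there exists a strictly increasing continuous function $\rho:[0,\infty)\to(0,\infty)$ such that $\rho(\xi)\to+\infty$ as $\xi\to\infty$, $\rho(\xi)\le\rho_0(\xi)$ for all $\xi\ge 0$, and $\rho(\xi^2)\le 2\rho(\xi)$ for all $\xi\ge 0$. -/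
open Filter

/-- Existence of a slowly growing continuous strictly increasing minorant with the
doubling property `ρ(ξ²) ≤ 2ρ(ξ)`. -/
theorem stmt_10 (ρ₀ : ℝ → ℝ) (hρ₀_pos : ∀ ξ : ℝ, 0 ≤ ξ → 0 < ρ₀ ξ)
    (hρ₀_mono : MonotoneOn ρ₀ (Set.Ici 0))
    (hρ₀_div : Tendsto ρ₀ atTop atTop) :
    ∃ ρ : ℝ → ℝ, ContinuousOn ρ (Set.Ici 0) ∧ StrictMonoOn ρ (Set.Ici 0) ∧
      Tendsto ρ atTop atTop ∧
      (∀ ξ : ℝ, 0 ≤ ξ → 0 < ρ ξ ∧ ρ ξ ≤ ρ₀ ξ) ∧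
      (∀ ξ : ℝ, 0 ≤ ξ → ρ (ξ ^ 2) ≤ 2 * ρ ξ) := by
  classical
  set E : ℝ := Real.exp 1 with hE
  have hE1 : (1:ℝ) ≤ E := by rw [hE]; nlinarith [Real.add_one_le_exp (1:ℝ)]
  have hE0 : (0:ℝ) < E := lt_of_lt_of_le one_pos hE1
  -- inner argument map
  set A : ℝ → ℝ := fun s => Real.exp (Real.exp s) - E with hA
  have hA0 : ∀ s : ℝ, 0 ≤ s → 0 ≤ A s := by
    intro s hs
    have : (1:ℝ) ≤ Real.exp s := by simpa using Real.exp_le_exp.2 hs |>.trans_eq rfl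
    have h1 : Real.exp 1 ≤ Real.exp (Real.exp s) := Real.exp_le_exp.2 (by
      have := Real.one_le_exp hs; linarith)
    simp only [hA]; rw [hE]; linarith
  set H : ℝ → ℝ := fun s => Real.log (ρ₀ (A s)) with hHdef
  set c₀ : ℝ := Real.log (ρ₀ 0) with hc₀
  have hAmono : ∀ s t : ℝ, s ≤ t → A s ≤ A t := by
    intro s t hst
    simp only [hA]
    have := Real.exp_le_exp.2 (Real.exp_le_exp.2 hst)
    linarith
  have hHc : ∀ s : ℝ, 0 ≤ s → c₀ ≤ H s := by
    intro s hs
    have h1 : ρ₀ 0 ≤ ρ₀ (A s) := hρ₀_mono (Set.self_mem_Ici) (hA0 s hs) (hA0 s hs)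
    exact Real.log_le_log (hρ₀_pos 0 le_rfl) h1
  have hHmono : ∀ s t : ℝ, 0 ≤ s → s ≤ t → H s ≤ H t := by
    intro s t hs hst
    have h1 : ρ₀ (A s) ≤ ρ₀ (A t) :=
      hρ₀_mono (hA0 s hs) (hA0 t (hs.trans hst)) (hAmono s t hst)
    exact Real.log_le_log (hρ₀_pos _ (hA0 s hs)) h1
  -- inf-convolution
  set S : ℝ → Set ℝ := fun t => (fun s => H s + |t - s| / 2) '' Set.Ici 0 with hS
  have hSne : ∀ t : ℝ, (S t).Nonempty := fun t => ⟨_, ⟨0, Set.self_mem_Ici, rfl⟩⟩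
  have hSbdd : ∀ t : ℝ, BddBelow (S t) := by
    intro t
    refine ⟨c₀, ?_⟩
    rintro x ⟨s, hs, rfl⟩
    have := hHc s hs
    have : (0:ℝ) ≤ |t - s| / 2 := by positivity
    have := hHc s hs
    linarith
  set G₀ : ℝ → ℝ := fun t => sInf (S t) with hG₀
  have hG₀leH : ∀ t : ℝ, 0 ≤ t → G₀ t ≤ H t := by
    intro t ht
    have : H t + |t - t| / 2 ∈ S t := ⟨t, ht, rfl⟩
    have h := csInf_le (hSbdd t) this
    simpa using h
  have hG₀lb : ∀ t : ℝ, c₀ ≤ G₀ t := by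
    intro t
    apply le_csInf (hSne t)
    rintro x ⟨s, hs, rfl⟩
    have := hHc s hs
    have h2 : (0:ℝ) ≤ |t - s| / 2 := by positivity
    linarith
  have hLip : ∀ t t' : ℝ, G₀ t' ≤ G₀ t + |t' - t| / 2 := by
    intro t t'
    have key : ∀ x ∈ S t, G₀ t' - |t' - t| / 2 ≤ x := by
      rintro x ⟨s, hs, rfl⟩
      have h1 : G₀ t' ≤ H s + |t' - s| / 2 := csInf_le (hSbdd t') ⟨s, hs, rfl⟩
      have h2 : |t' - s| ≤ |t' - t| + |t - s| := by
        have := abs_sub_le t' t s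
        simpa using this
      linarith
    have := le_csInf (hSne t) key
    linarith
  have hMono : ∀ t t' : ℝ, 0 ≤ t → t ≤ t' → G₀ t ≤ G₀ t' := by
    intro t t' ht htt'
    apply le_csInf (hSne t')
    rintro x ⟨s, hs, rfl⟩
    set s' : ℝ := max 0 (s - (t' - t)) with hs'
    have hs'0 : 0 ≤ s' := le_max_left _ _
    have hs's : s' ≤ s := max_le hs (by linarith)
    have hH' : H s' ≤ H s := hHmono s' s hs'0 hs's
    have habs : |t - s'| ≤ |t' - s| := by
      rcases le_or_gt (t' - t) s with hcase | hcase
      · have : s' = s - (t' - t) := max_eq_right (by linarith)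
        rw [this]
        have : t - (s - (t' - t)) = t' - s := by ring
        rw [this]
      · have h0 : s' = 0 := max_eq_left (by linarith)
        rw [h0]
        have h1 : t' - s > t := by linarith
        have h2 : |t - 0| = t := by rw [sub_zero]; exact abs_of_nonneg ht
        have h3 : |t' - s| = t' - s := abs_of_nonneg (by linarith)
        rw [h2, h3]; linarith
    have h1 : G₀ t ≤ H s' + |t - s'| / 2 := csInf_le (hSbdd t) ⟨s', hs'0, rfl⟩
    linarith
  have hLB : ∀ t : ℝ, 0 ≤ t → min (H (t/2)) (c₀ + t/4) ≤ G₀ t := by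
    intro t ht
    apply le_csInf (hSne t)
    rintro x ⟨s, hs, rfl⟩
    rcases le_or_gt (t/2) s with hcase | hcase
    · have h1 : H (t/2) ≤ H s := hHmono _ _ (by linarith) hcase
      have h2 : (0:ℝ) ≤ |t - s| / 2 := by positivity
      have := min_le_left (H (t/2)) (c₀ + t/4)
      linarith
    · have h1 : c₀ ≤ H s := hHc s hs
      have h2 : t - s > t/2 := by linarith
      have h3 : |t - s| ≥ t/2 := by
        rw [abs_of_nonneg (by linarith)]; linarith
      have := min_le_right (H (t/2)) (c₀ + t/4)
      linarith
  -- G and its continuity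
  set G : ℝ → ℝ := fun t => G₀ t - Real.exp (-t) / 2 with hG
  have hG₀cont : Continuous G₀ := by
    apply (LipschitzWith.of_dist_le_mul (K := (2⁻¹ : NNReal)) ?_).continuous
    intro x y
    rw [Real.dist_eq, Real.dist_eq]
    have h1 := hLip y x
    have h2 := hLip x y
    rw [abs_sub_comm y x] at h2
    have : (((2:NNReal)⁻¹ : NNReal) : ℝ) = 2⁻¹ := by simp
    rw [this]
    rw [abs_sub_le_iff]
    constructor <;> · linarith
  have hGcont : Continuous G :=
    hG₀cont.sub ((Real.continuous_exp.comp continuous_neg).div_const 2)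
  -- coordinates
  set T : ℝ → ℝ := fun ξ => Real.log (Real.log (ξ + E)) with hT
  have hlogpos : ∀ ξ : ℝ, 0 ≤ ξ → 1 ≤ Real.log (ξ + E) := by
    intro ξ hξ
    have h1 : E ≤ ξ + E := by linarith
    have := Real.log_le_log hE0 h1
    rw [hE, Real.log_exp] at this
    exact this
  have hT0 : ∀ ξ : ℝ, 0 ≤ ξ → 0 ≤ T ξ := by
    intro ξ hξ
    have := hlogpos ξ hξ
    simpa [hT] using Real.log_nonneg this
  have hTA : ∀ ξ : ℝ, 0 ≤ ξ → A (T ξ) = ξ := by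
    intro ξ hξ
    have h1 : 0 < Real.log (ξ + E) := lt_of_lt_of_le one_pos (hlogpos ξ hξ)
    simp only [hA, hT]
    rw [Real.exp_log h1, Real.exp_log (by linarith : (0:ℝ) < ξ + E)]
    ring
  refine ⟨fun ξ => Real.exp (G (T ξ)), ?_, ?_, ?_, ?_, ?_⟩
  · -- continuity
    have hTcont : ContinuousOn T (Set.Ici 0) := by
      intro ξ hξ
      have h1 : (0:ℝ) < ξ + E := by
        have : (0:ℝ) ≤ ξ := hξ; linarith
      have h2 : (0:ℝ) < Real.log (ξ + E) := lt_of_lt_of_le one_pos (hlogpos ξ hξ)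
      apply ContinuousAt.continuousWithinAt
      have hi : ContinuousAt (fun x : ℝ => Real.log (x + E)) ξ :=
        ContinuousAt.log (continuousAt_id.add continuousAt_const) h1.ne'
      exact hi.log h2.ne'
    exact Real.continuous_exp.comp_continuousOn (hGcont.comp_continuousOn hTcont)
  · -- strict mono
    intro a ha b hb hab
    have ha' : (0:ℝ) ≤ a := ha
    have hb' : (0:ℝ) ≤ b := hb
    have hTab : T a < T b := by
      simp only [hT]
      have h1 : (0:ℝ) < a + E := by linarith
      have h2 : Real.log (a + E) < Real.log (b + E) :=
        Real.log_lt_log h1 (by linarith)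
      exact Real.log_lt_log (lt_of_lt_of_le one_pos (hlogpos a ha')) h2
    have h1 : G₀ (T a) ≤ G₀ (T b) := hMono _ _ (hT0 a ha') hTab.le
    have h2 : Real.exp (-(T b)) < Real.exp (-(T a)) := Real.exp_lt_exp.2 (by linarith)
    apply Real.exp_lt_exp.2
    simp only [hG]
    linarith
  · -- tendsto atTop
    have hTtop : Tendsto T atTop atTop := by
      apply Real.tendsto_log_atTop.comp
      apply Real.tendsto_log_atTop.comp
      exact tendsto_atTop_add_const_right _ E tendsto_id
    have hHtop : Tendsto (fun t => H (t/2)) atTop atTop := by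
      apply Real.tendsto_log_atTop.comp
      apply hρ₀_div.comp
      have : Tendsto A atTop atTop := by
        apply tendsto_atTop_add_const_right
        exact Real.tendsto_exp_atTop.comp Real.tendsto_exp_atTop
      exact this.comp (tendsto_id.atTop_div_const two_pos)
    have hlin : Tendsto (fun t : ℝ => c₀ + t/4) atTop atTop := by
      apply tendsto_atTop_add_const_left
      exact tendsto_id.atTop_div_const (by norm_num)
    have hGtop : Tendsto G atTop atTop := by
      rw [tendsto_atTop] at hHtop hlin ⊢
      intro b
      filter_upwards [hHtop (b + 1), hlin (b + 1), eventually_ge_atTop (0:ℝ)]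
        with t h1 h2 ht
      have h3 := hLB t ht
      have h4 : min (H (t/2)) (c₀ + t/4) ≥ b + 1 := le_min h1 h2
      have h5 : Real.exp (-t) ≤ 1 := Real.exp_le_one_iff.2 (by linarith)
      simp only [hG]
      linarith
    exact Real.tendsto_exp_atTop.comp (hGtop.comp hTtop)
  · -- positivity and minorant
    intro ξ hξ
    refine ⟨Real.exp_pos _, ?_⟩
    have h1 : G (T ξ) ≤ G₀ (T ξ) := by
      simp only [hG]
      have := Real.exp_pos (-(T ξ)); linarith
    have h2 : G₀ (T ξ) ≤ H (T ξ) := hG₀leH _ (hT0 ξ hξ)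
    have h3 : H (T ξ) = Real.log (ρ₀ ξ) := by
      simp only [hHdef]; rw [hTA ξ hξ]
    calc Real.exp (G (T ξ)) ≤ Real.exp (H (T ξ)) := Real.exp_le_exp.2 (h1.trans h2)
      _ = ρ₀ ξ := by rw [h3, Real.exp_log (hρ₀_pos ξ hξ)]
  · -- doubling
    intro ξ hξ
    set a := T ξ with ha
    set b := T (ξ^2) with hb
    have ha0 : 0 ≤ a := hT0 ξ hξ
    have hb0 : 0 ≤ b := hT0 _ (by positivity)
    have key : G b ≤ G a + Real.log 2 := by
      rcases le_or_gt b a with hba | hab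
      · have h1 : G₀ b ≤ G₀ a := hMono b a hb0 hba
        have h2 : Real.exp (-a) ≤ Real.exp (-b) := Real.exp_le_exp.2 (by linarith)
        have h3 : (0:ℝ) ≤ Real.log 2 := Real.log_nonneg one_le_two
        simp only [hG]
        linarith
      · -- b > a; show b - a ≤ log 2 and 1-Lipschitz bound
        have hba2 : b - a ≤ Real.log 2 := by
          have h1 : (0:ℝ) < ξ + E := by linarith
          have h2 : (0:ℝ) < ξ^2 + E := by positivity
          have hsq : ξ^2 + E ≤ (ξ + E)^2 := by nlinarith
          have h3 : Real.log (ξ^2 + E) ≤ Real.log ((ξ+E)^2) :=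
            Real.log_le_log h2 hsq
          have h4 : Real.log ((ξ+E)^2) = 2 * Real.log (ξ+E) := by
            rw [sq, Real.log_mul h1.ne' h1.ne']; ring
          have hl1 : 1 ≤ Real.log (ξ + E) := hlogpos ξ hξ
          have h5 : Real.log (ξ^2 + E) ≤ 2 * Real.log (ξ+E) := by linarith
          have h6 : (0:ℝ) < Real.log (ξ^2 + E) :=
            lt_of_lt_of_le one_pos (hlogpos _ (by positivity))
          have h7 : b ≤ Real.log (2 * Real.log (ξ+E)) := by
            simp only [hb, hT]
            exact Real.log_le_log h6 h5
          have h8 : Real.log (2 * Real.log (ξ+E)) = Real.log 2 + Real.log (Real.log (ξ+E)) :=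
            Real.log_mul two_ne_zero (by linarith)
          simp only [ha, hT]
          rw [h8] at h7
          simp only [hb, hT] at h7 ⊢
          linarith
        have hG₀ : G₀ b ≤ G₀ a + (b - a) / 2 := by
          have := hLip a b
          rw [abs_of_nonneg (by linarith : (0:ℝ) ≤ b - a)] at this
          exact this
        have hexp : Real.exp (-a) - Real.exp (-b) ≤ b - a := by
          have h1 : Real.exp (-a) ≤ 1 := Real.exp_le_one_iff.2 (by linarith)
          have h2 : 1 - Real.exp (-(b-a)) ≤ b - a := by
            have := Real.add_one_le_exp (-(b-a)); linarith
          have h3 : Real.exp (-b) = Real.exp (-a) * Real.exp (-(b-a)) := by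
            rw [← Real.exp_add]; ring_nf
          have h4 := Real.exp_pos (-(b-a))
          have h5 := Real.exp_pos (-a)
          nlinarith
        simp only [hG]
        linarith
    calc Real.exp (G b) ≤ Real.exp (G a + Real.log 2) := Real.exp_le_exp.2 key
      _ = 2 * Real.exp (G a) := by
          rw [Real.exp_add, Real.exp_log two_pos]; ring
end
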